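/- As formal power series in u over ℚ, (1 + 3u)^{1/4} · ₂F₁(1/4, 3/4; 1; u) = ₂F₁(1/12, 5/12; 1; 27u(1−u)²/(1+3u)³), where (1+3u)^{1/4} is the binomial series and the argument 27u(1−u)²/(1+3u)³ is expanded as a formal power series with zero constant term. -/

import Mathlib

/-!
Both sides are power-series solutions of one second-order equation `goursatOperator h = 0`.
For the left side, this is the hypergeometric equation of `₂F₁(1/4, 3/4; 1; u)` conjugated by
`s = (1 + 3u)^{1/4}`, using `4 (1 + 3u) s' = 3 s`. For the right side, it is the pull-back of the
hypergeometric equation of `₂F₁(1/12, 5/12; 1; t)` along `t = w(u)` by the chain rule, using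
`(1 + 3u)⁴ w' = 27 (1 - u)(1 - 9u)`. The equation has a regular singular point at `0` with the
double indicial root `0`, so a power-series solution is determined by its constant term, which is
`1` on both sides.
-/

open PowerSeries

/-- The Gauss hypergeometric series `₂F₁(a,b;1;t) = Σ (a)ₙ(b)ₙ/((1)ₙ n!) tⁿ` as a formal
power series over ℚ. -/
noncomputable def hyp (a b : ℚ) : PowerSeries ℚ :=
  PowerSeries.mk fun n =>
    ((ascPochhammer ℚ n).eval a * (ascPochhammer ℚ n).eval b) /
      ((ascPochhammer ℚ n).eval 1 * (n.factorial : ℚ))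

/-- Composition `F(w(t))` of formal power series, valid when `w` has zero constant term. -/
noncomputable def pscomp (F w : PowerSeries ℚ) : PowerSeries ℚ :=
  PowerSeries.mk fun n => ∑ k ∈ Finset.range (n + 1), coeff k F * coeff n (w ^ k)

@[simp]
theorem Derivation.map_ofNat {R A M : Type*} [CommSemiring R] [CommSemiring A] [Algebra R A]
    [AddCommMonoid M] [Module A M] [Module R M] (D : Derivation R A M) (n : ℕ) [n.AtLeastTwo] :
    D (ofNat(n) : A) = 0 :=
  D.map_natCast n

namespace PowerSeries

variable {R : Type*}

theorem coeff_pow_eq_zero_of_lt [CommSemiring R] {w : R⟦X⟧} (hw : constantCoeff w = 0) {k n : ℕ}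
    (h : n < k) : coeff n (w ^ k) = 0 := by
  obtain ⟨v, rfl⟩ := X_dvd_iff.mpr hw
  rw [mul_pow, coeff_X_pow_mul', if_neg (by omega)]

theorem coeff_mul_eq_constantCoeff_mul [CommSemiring R] {A h : R⟦X⟧} {n : ℕ}
    (hh : ∀ j < n, coeff j h = 0) : coeff n (A * h) = constantCoeff A * coeff n h := by
  rw [coeff_mul, Finset.sum_eq_single (0, n)]
  · rw [coeff_zero_eq_constantCoeff_apply]
  · rintro ⟨i, j⟩ hij hne
    rw [Finset.HasAntidiagonal.mem_antidiagonal] at hij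
    rw [hh j (by grind), mul_zero]
  · simp

theorem coeff_X_mul_derivative [CommSemiring R] (f : R⟦X⟧) (n : ℕ) :
    coeff n (X * d⁄dX R f) = n * coeff n f := by
  cases n with
  | zero => simp
  | succ n => rw [coeff_succ_X_mul, coeff_derivative, mul_comm, Nat.cast_succ]

/-- Coefficient `m` of the equation reads `P(0) (m + 1)² hₘ₊₁ = (terms in h₀, …, hₘ)`:
the indicial equation `P(0) r² = 0` has the double root `0`. -/
theorem eq_zero_of_ode [CommRing R] [IsDomain R] [CharZero R] {P Q S h : R⟦X⟧}
    (hPQ : constantCoeff P = constantCoeff Q) (hP : constantCoeff P ≠ 0)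
    (hode : X * P * d⁄dX R (d⁄dX R h) + Q * d⁄dX R h + S * h = 0) (h0 : constantCoeff h = 0) :
    h = 0 := by
  suffices hle : ∀ n, ∀ j ≤ n, coeff j h = 0 from ext fun n ↦ hle n n le_rfl
  intro n
  induction n with
  | zero => simpa using h0
  | succ m ih =>
    intro j hj
    rcases Nat.lt_or_ge j (m + 1) with hjm | hjm
    · exact ih j (by omega)
    obtain rfl : j = m + 1 := by omega
    have hd : ∀ i < m, coeff i (d⁄dX R h) = 0 := fun i hi ↦ by
      rw [coeff_derivative, ih (i + 1) hi, zero_mul]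
    have hXdd : ∀ i < m, coeff i (X * d⁄dX R (d⁄dX R h)) = 0 := fun i hi ↦ by
      rw [coeff_X_mul_derivative, hd i hi, mul_zero]
    have hm := congrArg (coeff m) hode
    rw [mul_comm X, mul_assoc, map_add, map_add, coeff_mul_eq_constantCoeff_mul hXdd,
      coeff_mul_eq_constantCoeff_mul hd, coeff_mul_eq_constantCoeff_mul fun i hi ↦ ih i hi.le,
      ih m le_rfl, coeff_X_mul_derivative, coeff_derivative, ← hPQ, map_zero] at hm
    have hm' : constantCoeff P * ((m : R) + 1) ^ 2 * coeff (m + 1) h = 0 := by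
      linear_combination hm
    exact (mul_eq_zero.mp hm').resolve_left
      (mul_ne_zero hP (pow_ne_zero _ (Nat.cast_add_one_ne_zero m)))

end PowerSeries

theorem pscomp_eq_subst {F w : ℚ⟦X⟧} (hw : constantCoeff w = 0) : pscomp F w = F.subst w := by
  ext n
  rw [pscomp, coeff_mk, coeff_subst' (HasSubst.of_constantCoeff_zero' hw),
    finsum_eq_sum_of_support_subset (s := Finset.range (n + 1))]
  · rfl
  · intro k hk
    by_contra hkn
    simp only [Finset.coe_range, Set.mem_Iio, not_lt] at hkn
    exact hk (by simp only [coeff_pow_eq_zero_of_lt hw (by omega : n < k), smul_zero])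

theorem constantCoeff_pscomp (F w : ℚ⟦X⟧) : constantCoeff (pscomp F w) = constantCoeff F := by
  rw [← coeff_zero_eq_constantCoeff_apply, pscomp, coeff_mk]
  simp

theorem constantCoeff_hyp (a b : ℚ) : constantCoeff (hyp a b) = 1 := by
  rw [← coeff_zero_eq_constantCoeff_apply, hyp, coeff_mk]
  simp

theorem coeff_hyp_succ (a b : ℚ) (n : ℕ) :
    ((n : ℚ) + 1) ^ 2 * coeff (n + 1) (hyp a b) = (a + n) * (b + n) * coeff n (hyp a b) := by
  have hfac : ((n + 1).factorial : ℚ) = n.factorial * (n + 1) := by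
    rw [Nat.factorial_succ]; push_cast; ring
  simp only [hyp, coeff_mk, ascPochhammer_eval_one, ascPochhammer_succ_right, Polynomial.eval_mul,
    Polynomial.eval_add, Polynomial.eval_X, Polynomial.eval_natCast, hfac]
  field_simp

theorem hyp_ode (a b : ℚ) :
    X * (1 - X) * d⁄dX ℚ (d⁄dX ℚ (hyp a b)) + (1 - C (a + b + 1) * X) * d⁄dX ℚ (hyp a b) =
      C (a * b) * hyp a b := by
  set F := hyp a b
  -- `X² F'' = X (X F')' - X F'`: the `n`-th coefficient of each term is now read off directly
  have hlhs : X * (1 - X) * d⁄dX ℚ (d⁄dX ℚ F) + (1 - C (a + b + 1) * X) * d⁄dX ℚ F =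
      X * d⁄dX ℚ (d⁄dX ℚ F) - X * d⁄dX ℚ (X * d⁄dX ℚ F) + d⁄dX ℚ F
        - C (a + b) * (X * d⁄dX ℚ F) := by
    simp only [Derivation.leibniz, derivative_X, smul_eq_mul, map_add, map_one]
    ring
  ext n
  rw [hlhs, map_sub, coeff_C_mul, coeff_C_mul]
  simp only [map_add, map_sub, coeff_X_mul_derivative, coeff_derivative]
  linear_combination coeff_hyp_succ a b n

theorem hyp_quarter_ode :
    16 * (X * (1 - X)) * d⁄dX ℚ (d⁄dX ℚ (hyp (1 / 4) (3 / 4)))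
      + (16 - 32 * X) * d⁄dX ℚ (hyp (1 / 4) (3 / 4)) = 3 * hyp (1 / 4) (3 / 4) := by
  have hc : 16 * (C (1 / 4 + 3 / 4 + 1 : ℚ) : ℚ⟦X⟧) = 32 := by
    rw [← map_ofNat C 16, ← map_mul]; norm_num [map_ofNat]
  have hc' : 16 * (C (1 / 4 * (3 / 4) : ℚ) : ℚ⟦X⟧) = 3 := by
    rw [← map_ofNat C 16, ← map_mul]; norm_num [map_ofNat]
  linear_combination 16 * hyp_ode (1 / 4) (3 / 4) + X * d⁄dX ℚ (hyp (1 / 4) (3 / 4)) * hc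
    + hyp (1 / 4) (3 / 4) * hc'

theorem hyp_twelfth_ode :
    144 * (X * (1 - X)) * d⁄dX ℚ (d⁄dX ℚ (hyp (1 / 12) (5 / 12)))
      + (144 - 216 * X) * d⁄dX ℚ (hyp (1 / 12) (5 / 12)) = 5 * hyp (1 / 12) (5 / 12) := by
  have hc : 144 * (C (1 / 12 + 5 / 12 + 1 : ℚ) : ℚ⟦X⟧) = 216 := by
    rw [← map_ofNat C 144, ← map_mul]; norm_num [map_ofNat]
  have hc' : 144 * (C (1 / 12 * (5 / 12) : ℚ) : ℚ⟦X⟧) = 5 := by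
    rw [← map_ofNat C 144, ← map_mul]; norm_num [map_ofNat]
  linear_combination 144 * hyp_ode (1 / 12) (5 / 12) + X * d⁄dX ℚ (hyp (1 / 12) (5 / 12)) * hc
    + hyp (1 / 12) (5 / 12) * hc'

noncomputable def goursatOperator (h : ℚ⟦X⟧) : ℚ⟦X⟧ :=
  16 * X * (1 - X) * (1 + 3 * X) ^ 2 * d⁄dX ℚ (d⁄dX ℚ h)
    + 8 * (1 + 3 * X) * (2 - X - 9 * X ^ 2) * d⁄dX ℚ h - 15 * (1 - X) * h

theorem eq_of_goursatOperator_eq_zero {f g : ℚ⟦X⟧} (hf : goursatOperator f = 0)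
    (hg : goursatOperator g = 0) (h0 : constantCoeff f = constantCoeff g) : f = g := by
  refine sub_eq_zero.mp (eq_zero_of_ode (P := 16 * (1 - X) * (1 + 3 * X) ^ 2)
    (Q := 8 * (1 + 3 * X) * (2 - X - 9 * X ^ 2)) (S := -15 * (1 - X)) ?_ ?_ ?_ ?_)
  · norm_num [map_ofNat]
  · norm_num [map_ofNat]
  · simp only [goursatOperator, map_sub] at hf hg ⊢
    linear_combination hf - hg
  · rw [map_sub, h0, sub_self]

theorem derivative_of_pow_four {s : ℚ⟦X⟧} (hs : s ^ 4 = 1 + 3 * X) :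
    4 * (1 + 3 * X) * d⁄dX ℚ s = 3 * s := by
  have h := congrArg (d⁄dX ℚ) hs
  simp only [derivative_pow, map_add, Derivation.map_one_eq_zero, Derivation.leibniz,
    Derivation.map_ofNat, derivative_X, smul_eq_mul] at h
  linear_combination s * h - 4 * d⁄dX ℚ s * hs

theorem goursatOperator_mul_hyp {s : ℚ⟦X⟧} (hs : s ^ 4 = 1 + 3 * X) :
    goursatOperator (s * hyp (1 / 4) (3 / 4)) = 0 := by
  have hs1 := derivative_of_pow_four hs
  have hs2 : 16 * (1 + 3 * X) ^ 2 * d⁄dX ℚ (d⁄dX ℚ s) = -27 * s := by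
    have h := congrArg (d⁄dX ℚ) hs1
    simp only [map_add, Derivation.map_one_eq_zero, Derivation.leibniz,
      Derivation.map_ofNat, derivative_X, smul_eq_mul] at h
    linear_combination 4 * (1 + 3 * X) * h - 9 * hs1
  set y := hyp (1 / 4) (3 / 4)
  simp only [goursatOperator, map_add, Derivation.leibniz, smul_eq_mul]
  linear_combination s * (1 + 3 * X) ^ 2 * hyp_quarter_ode
    + (8 * X * (1 - X) * (1 + 3 * X) * d⁄dX ℚ y + 2 * (2 - X - 9 * X ^ 2) * y) * hs1
    + X * (1 - X) * y * hs2

section CubeMulEq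

variable {w : ℚ⟦X⟧} (hw : (1 + 3 * X) ^ 3 * w = 27 * X * (1 - X) ^ 2)
include hw

theorem constantCoeff_eq_zero_of_cube_mul_eq : constantCoeff w = 0 := by
  simpa [map_ofNat] using congrArg constantCoeff hw

theorem derivative_of_cube_mul_eq :
    (1 + 3 * X) ^ 4 * d⁄dX ℚ w = 27 * (1 - X) * (1 - 9 * X) := by
  have h := congrArg (d⁄dX ℚ) hw
  simp only [map_add, map_sub, Derivation.leibniz, Derivation.leibniz_pow,
    Derivation.map_one_eq_zero, Derivation.map_ofNat, derivative_X, smul_eq_mul, nsmul_eq_mul] at h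
  linear_combination (1 + 3 * X) * h - 9 * hw

theorem derivative_derivative_of_cube_mul_eq :
    (1 + 3 * X) ^ 5 * d⁄dX ℚ (d⁄dX ℚ w) = 2916 * X - 1458 * X ^ 2 - 594 := by
  have hw1 := derivative_of_cube_mul_eq hw
  have h := congrArg (d⁄dX ℚ) hw1
  simp only [map_add, map_sub, Derivation.leibniz, Derivation.leibniz_pow,
    Derivation.map_one_eq_zero, Derivation.map_ofNat, derivative_X, smul_eq_mul, nsmul_eq_mul] at h
  linear_combination (1 + 3 * X) * h - 12 * hw1

/-- The equation is verified after multiplication by `(1 + 3X)⁸`, which clears the denominators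
of `w`, `w'` and `w''`. -/
theorem goursatOperator_pscomp_hyp : goursatOperator (pscomp (hyp (1 / 12) (5 / 12)) w) = 0 := by
  have hw0 := constantCoeff_eq_zero_of_cube_mul_eq hw
  have hsub := HasSubst.of_constantCoeff_zero' hw0
  set F := hyp (1 / 12) (5 / 12)
  have hG := congrArg (substAlgHom hsub) hyp_twelfth_ode
  simp only [map_add, map_mul, map_sub, map_ofNat, map_one, coe_substAlgHom, subst_X hsub] at hG
  have h13 : (1 + 3 * X : ℚ⟦X⟧) ≠ 0 := fun h ↦ by simpa [map_ofNat] using congrArg constantCoeff h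
  rw [pscomp_eq_subst hw0]
  refine (mul_eq_zero.mp ?_).resolve_left (pow_ne_zero 8 h13)
  simp only [goursatOperator, derivative_subst hsub, Derivation.leibniz, smul_eq_mul]
  set G1 := subst w (d⁄dX ℚ F)
  set G2 := subst w (d⁄dX ℚ (d⁄dX ℚ F))
  linear_combination
    16 * X * (1 - X) * (1 + 3 * X) ^ 2 * G2
        * ((1 + 3 * X) ^ 4 * d⁄dX ℚ w + 27 * (1 - X) * (1 - 9 * X)) * derivative_of_cube_mul_eq hw
    + 16 * X * (1 - X) * (1 + 3 * X) ^ 5 * G1 * derivative_derivative_of_cube_mul_eq hw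
    + 8 * (1 + 3 * X) ^ 5 * (2 - X - 9 * X ^ 2) * G1 * derivative_of_cube_mul_eq hw
    + 3 * (1 - X) * (1 + 3 * X) ^ 8 * hG
    + (-432 * (1 - X) * (1 + 3 * X) ^ 2 * G2
          * ((1 + 3 * X) ^ 3 - (1 + 3 * X) ^ 3 * w - 27 * X * (1 - X) ^ 2)
        + 648 * (1 - X) * (1 + 3 * X) ^ 5 * G1) * hw

end CubeMulEq

/-- `(1 + 3u)^{1/4} · ₂F₁(1/4,3/4;1;u) = ₂F₁(1/12,5/12;1;27u(1−u)²/(1+3u)³)`, where `s` is the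
binomial series `(1+3u)^{1/4}` (with `s(0)=1`, `s⁴ = 1+3u`) and the inner argument `w` is the
power series with `(1+3u)³·w = 27u(1−u)²`. -/
theorem hypergeom_goursat_deg3 (s w : PowerSeries ℚ)
    (hs0 : constantCoeff s = 1)
    (hs : s ^ 4 = 1 + 3 * X)
    (hw : (1 + 3 * X) ^ 3 * w = 27 * X * (1 - X) ^ 2) :
    s * hyp (1 / 4) (3 / 4) = pscomp (hyp (1 / 12) (5 / 12)) w :=
  eq_of_goursatOperator_eq_zero (goursatOperator_mul_hyp hs) (goursatOperator_pscomp_hyp hw) <| by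
    rw [map_mul, hs0, constantCoeff_pscomp, constantCoeff_hyp, constantCoeff_hyp, one_mul]
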